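/- For every real q with 0 < q < 1 and every complex x with Re x > 0, the q-gamma function satisfies Γ_q(x) = exp( Σ_{p=1}^∞ (1/p) [ (q^{xp} − q^p)/(1 − q^p) + (x − 1) q^p ] ), where the series on the right converges absolutely. -/

import Mathlib

open Complex

/-- The infinite q-Pochhammer symbol `(a; q) = ∏_{n=0}^∞ (1 - a qⁿ)`. -/
noncomputable def qPoch (a : ℂ) (q : ℝ) : ℂ := ∏' n : ℕ, (1 - a * (q : ℂ) ^ n)

/-- `q^x = exp(x log q)` for the positive real `q`. -/
noncomputable def qpow (q : ℝ) (x : ℂ) : ℂ := Complex.exp (x * (Real.log q : ℂ))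

/-- The q-gamma function `Γ_q(x) = (1-q)^{1-x} (q;q)/(q^x;q)`. -/
noncomputable def qGamma (q : ℝ) (x : ℂ) : ℂ :=
  Complex.exp ((1 - x) * (Real.log (1 - q) : ℂ)) * qPoch (q : ℂ) q / qPoch (qpow q x) q

/-! Writing `(a; q) = exp (∑ₙ log (1 - a qⁿ))` and expanding `-log (1 - a qⁿ) = ∑ₚ (a qⁿ)ᵖ / p`
gives a double series that converges absolutely for `‖a‖, |q| < 1`; summing over `n` first yields
`(a; q) = exp (-∑ₚ aᵖ / (p (1 - qᵖ)))`. Applied to `a = q` and `a = qˣ`, together with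
`log (1 - q) = -∑ₚ qᵖ / p`, the exponent of `Γ_q(x)` becomes the stated series termwise. -/

section QPochhammer

variable {a r : ℂ}

lemma one_sub_norm_le_norm_one_sub_pow_succ (hr : ‖r‖ < 1) (n : ℕ) :
    1 - ‖r‖ ≤ ‖1 - r ^ (n + 1)‖ := by
  have hpow : ‖r‖ ^ (n + 1) ≤ ‖r‖ := pow_le_of_le_one (norm_nonneg r) hr.le n.succ_ne_zero
  calc 1 - ‖r‖ ≤ ‖(1 : ℂ)‖ - ‖r ^ (n + 1)‖ := by rw [norm_one, norm_pow]; linarith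
    _ ≤ ‖1 - r ^ (n + 1)‖ := norm_sub_norm_le _ _

lemma one_sub_pow_succ_ne_zero (hr : ‖r‖ < 1) (n : ℕ) : 1 - r ^ (n + 1) ≠ 0 :=
  norm_pos_iff.mp <| (sub_pos.mpr hr).trans_le (one_sub_norm_le_norm_one_sub_pow_succ hr n)

lemma summable_pow_succ_div_mul_one_sub_pow_succ (ha : ‖a‖ < 1) (hr : ‖r‖ < 1) :
    Summable fun p : ℕ => a ^ (p + 1) / ((p + 1) * (1 - r ^ (p + 1))) := by
  refine Summable.of_norm_bounded
    ((summable_geometric_of_lt_one (norm_nonneg a) ha).div_const (1 - ‖r‖)) fun p => ?_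
  have hden : 1 - ‖r‖ ≤ ‖((p : ℂ) + 1) * (1 - r ^ (p + 1))‖ := by
    rw [norm_mul]
    have hp : (1 : ℝ) ≤ ‖(p : ℂ) + 1‖ := by exact_mod_cast Nat.one_le_cast.mpr p.succ_pos
    nlinarith [one_sub_norm_le_norm_one_sub_pow_succ hr p, norm_nonneg r]
  rw [norm_div, norm_pow]
  exact div_le_div₀ (by positivity) (pow_le_pow_of_le_one (norm_nonneg a) ha.le p.le_succ)
    (by linarith) hden

lemma norm_mul_pow_lt_one (ha : ‖a‖ < 1) (hr : ‖r‖ < 1) (n : ℕ) : ‖a * r ^ n‖ < 1 := by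
  rw [norm_mul, norm_pow]
  exact (mul_le_of_le_one_right (norm_nonneg a) (pow_le_one₀ (norm_nonneg r) hr.le)).trans_lt ha

lemma summable_mul_pow_pow_succ_div_succ (ha : ‖a‖ < 1) (hr : ‖r‖ < 1) :
    Summable fun np : ℕ × ℕ => (a * r ^ np.1) ^ (np.2 + 1) / (np.2 + 1) := by
  refine Summable.of_norm_bounded ((summable_geometric_of_lt_one (norm_nonneg r) hr).mul_of_nonneg
    (summable_geometric_of_lt_one (norm_nonneg a) ha) (fun _ => by positivity)
    fun _ => by positivity) fun ⟨n, p⟩ => ?_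
  have hrn : ‖r‖ ^ n ≤ 1 := pow_le_one₀ (norm_nonneg r) hr.le
  have hp : (1 : ℝ) ≤ ‖(p : ℂ) + 1‖ := by exact_mod_cast Nat.one_le_cast.mpr p.succ_pos
  calc ‖(a * r ^ n) ^ (p + 1) / ((p : ℂ) + 1)‖
      ≤ (‖a‖ * ‖r‖ ^ n) ^ p * (‖a‖ * ‖r‖ ^ n) := by
        rw [norm_div, norm_pow, norm_mul, norm_pow, ← pow_succ]
        exact div_le_self (by positivity) hp
    _ ≤ ‖a‖ ^ p * ‖r‖ ^ n := by
        gcongr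
        · exact mul_le_of_le_one_right (norm_nonneg a) hrn
        · exact mul_le_of_le_one_left (by positivity) ha.le
    _ = ‖r‖ ^ n * ‖a‖ ^ p := mul_comm _ _

lemma hasSum_log_one_sub_mul_pow (ha : ‖a‖ < 1) (hr : ‖r‖ < 1) :
    HasSum (fun n : ℕ => log (1 - a * r ^ n))
      (-∑' p : ℕ, a ^ (p + 1) / ((p + 1) * (1 - r ^ (p + 1)))) := by
  set F : ℕ × ℕ → ℂ := fun np => (a * r ^ np.1) ^ (np.2 + 1) / (np.2 + 1)
  have hF : Summable F := summable_mul_pow_pow_succ_div_succ ha hr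
  have hrows : HasSum (fun n : ℕ => -log (1 - a * r ^ n)) (∑' np, F np) :=
    hF.hasSum.prod_fiberwise fun n => (hasSum_taylorSeries_neg_log' (norm_mul_pow_lt_one ha hr n) :)
  have hcols :
      HasSum (fun p : ℕ => a ^ (p + 1) / ((p + 1) * (1 - r ^ (p + 1)))) (∑' np, F np) := by
    rw [← (Equiv.prodComm ℕ ℕ).tsum_eq]
    refine hF.prod_symm.hasSum.prod_fiberwise fun p => ?_
    have hrp : ‖r ^ (p + 1)‖ < 1 := by
      rw [norm_pow]; exact pow_lt_one₀ (norm_nonneg r) hr p.succ_ne_zero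
    have hgeom := (hasSum_geometric_of_norm_lt_one hrp).mul_left (a ^ (p + 1) / (p + 1))
    rw [← div_eq_mul_inv, div_div] at hgeom
    refine hgeom.congr_fun fun n => ?_
    simp only [F, Prod.swap_prod_mk]
    rw [mul_pow, ← pow_mul, ← pow_mul, mul_comm n]
    ring
  simpa [hcols.tsum_eq] using hrows.neg

theorem tprod_one_sub_mul_pow (ha : ‖a‖ < 1) (hr : ‖r‖ < 1) :
    ∏' n : ℕ, (1 - a * r ^ n) = exp (-∑' p : ℕ, a ^ (p + 1) / ((p + 1) * (1 - r ^ (p + 1)))) := by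
  have hlog := hasSum_log_one_sub_mul_pow ha hr
  rw [← hlog.tsum_eq, cexp_tsum_eq_tprod (fun n => ?_) hlog.summable]
  exact sub_ne_zero.mpr fun h => (norm_mul_pow_lt_one ha hr n).ne (h ▸ norm_one)

end QPochhammer

lemma qpow_mul_natCast (q : ℝ) (x : ℂ) (n : ℕ) : qpow q (x * n) = qpow q x ^ n := by
  rw [qpow, qpow, ← exp_nat_mul]
  ring_nf

lemma norm_qpow (q : ℝ) (x : ℂ) : ‖qpow q x‖ = Real.exp (x.re * Real.log q) := by
  simp [qpow, norm_exp]

lemma norm_qpow_lt_one {q : ℝ} {x : ℂ} (hq0 : 0 < q) (hq1 : q < 1) (hx : 0 < x.re) :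
    ‖qpow q x‖ < 1 := by
  rw [norm_qpow, Real.exp_lt_one_iff]
  exact mul_neg_of_pos_of_neg hx (Real.log_neg hq0 hq1)

theorem qGamma_eq_exp_tsum (q : ℝ) (hq0 : 0 < q) (hq1 : q < 1) (x : ℂ) (hx : 0 < x.re) :
    Summable (fun p : ℕ =>
      ‖(1 / ((p : ℂ) + 1)) *
        ((qpow q (x * ((p : ℂ) + 1)) - (q : ℂ) ^ (p + 1)) / (1 - (q : ℂ) ^ (p + 1)) +
          (x - 1) * (q : ℂ) ^ (p + 1))‖) ∧
    qGamma q x = Complex.exp (∑' p : ℕ,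
      (1 / ((p : ℂ) + 1)) *
        ((qpow q (x * ((p : ℂ) + 1)) - (q : ℂ) ^ (p + 1)) / (1 - (q : ℂ) ^ (p + 1)) +
          (x - 1) * (q : ℂ) ^ (p + 1))) := by
  have hq : ‖(q : ℂ)‖ < 1 := by rwa [norm_real, Real.norm_of_nonneg hq0.le]
  have ha := norm_qpow_lt_one hq0 hq1 hx
  have hsum : HasSum (fun p : ℕ => (1 / ((p : ℂ) + 1)) *
      ((qpow q (x * ((p : ℂ) + 1)) - (q : ℂ) ^ (p + 1)) / (1 - (q : ℂ) ^ (p + 1)) +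
        (x - 1) * (q : ℂ) ^ (p + 1)))
      ((∑' p : ℕ, qpow q x ^ (p + 1) / ((p + 1) * (1 - (q : ℂ) ^ (p + 1)))) -
        (∑' p : ℕ, (q : ℂ) ^ (p + 1) / ((p + 1) * (1 - (q : ℂ) ^ (p + 1)))) +
          (x - 1) * -log (1 - q)) := by
    refine (((summable_pow_succ_div_mul_one_sub_pow_succ ha hq).hasSum.sub
      (summable_pow_succ_div_mul_one_sub_pow_succ hq hq).hasSum).add
        ((hasSum_taylorSeries_neg_log' hq).mul_left (x - 1))).congr_fun fun p => ?_
    have hden := one_sub_pow_succ_ne_zero hq p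
    rw [← Nat.cast_add_one, qpow_mul_natCast]
    field_simp
  refine ⟨summable_norm_iff.mpr hsum.summable, ?_⟩
  have hlog : (Real.log (1 - q) : ℂ) = log (1 - q) := by
    rw [ofReal_log (by linarith), ofReal_sub, ofReal_one]
  rw [hsum.tsum_eq, qGamma, qPoch, qPoch, tprod_one_sub_mul_pow ha hq, tprod_one_sub_mul_pow hq hq,
    hlog, ← exp_add, ← exp_sub]
  congr 1
  ring
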